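/- arXiv:2207.07548 — 2 statements merged into one kernel-verified Lean document; each statement's English description precedes it below -/
import Mathlib

section
/- Let ϖ > 0 and θ ≥ 0, and set C = max{1, 2^(θ−1)}. If f and g belong to B_ϖ^θ, then the pointwise product fg belongs to B_ϖ^θ and ‖fg‖_{ϖ,θ} ≤ 2C ‖f‖_{ϖ,θ} ‖g‖_{ϖ,θ}. -/
open MeasureTheory
open scoped ENNReal

noncomputable section

instance : Fact (0 < 2 * Real.pi) := ⟨by positivity⟩

/-- The norm `‖h‖_{ϖ,θ} = Σ_{k∈ℤ} (1 + |k|^θ) sup_{t∈[0,∞)} e^(ϖ t |k|) |ĥ(k, t)|`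
of the space `B_ϖ^θ`, valued in `ℝ≥0∞`. -/
def wienerNorm (ϖ θ : ℝ) (h : ℝ → AddCircle (2 * Real.pi) → ℂ) : ℝ≥0∞ :=
  ∑' k : ℤ, ENNReal.ofReal (1 + (|k| : ℝ) ^ θ) *
    ⨆ t : {t : ℝ // 0 ≤ t},
      ENNReal.ofReal (Real.exp (ϖ * (t : ℝ) * (|k| : ℝ)) * ‖fourierCoeff (h (t : ℝ)) k‖)

/-!
Since the Fourier coefficients of `f t` and `g t` are summable, both functions agree a.e. with
their (continuous) Fourier series: an integrable function with vanishing Fourier coefficients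
annihilates the trigonometric polynomials, hence by density every continuous function, hence
every indicator of a closed set, so it vanishes a.e. Consequently the coefficients of the product
are the convolution `Σ_j f̂(k - j) ĝ(j)`. The weight `ρ_t(k) = (1 + |k|^θ) e^{ϖ t |k|}` satisfies
`ρ_t(j + l) ≤ C ρ_t(j) ρ_t(l)`, because `|j + l|^θ ≤ C (|j|^θ + |l|^θ)` and `C ≥ 1`. Summing the
resulting convolution bound over `k` (Young's inequality on `ℓ¹(ℤ)`) gives
`‖fg‖_{ϖ,θ} ≤ C ‖f‖_{ϖ,θ} ‖g‖_{ϖ,θ}`.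
-/

open Filter Topology
open scoped BoundedContinuousFunction NNReal

theorem ae_eq_zero_of_forall_integral_smul_eq_zero {X E : Type*} [TopologicalSpace X]
    [HasOuterApproxClosed X] [MeasurableSpace X] [BorelSpace X]
    [NormedAddCommGroup E] [NormedSpace ℝ E] [CompleteSpace E]
    {μ : Measure X} {f : X → E} (hf : Integrable f μ)
    (h : ∀ c : X →ᵇ ℝ≥0, ∫ x, (c x : ℝ) • f x ∂μ = 0) : f =ᵐ[μ] 0 := by
  refine ae_eq_zero_of_forall_setIntegral_isClosed_eq_zero hf fun s hs => ?_
  have hlim : Tendsto (fun n => ∫ x, (hs.apprSeq n x : ℝ) • f x ∂μ) atTop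
      (𝓝 (∫ x in s, f x ∂μ)) := by
    rw [← integral_indicator hs.measurableSet]
    refine tendsto_integral_of_dominated_convergence (‖f ·‖) (fun n => ?_) hf.norm
      (fun n => ae_of_all _ fun x => ?_) (ae_of_all _ fun x => ?_)
    · exact (NNReal.continuous_coe.comp (hs.apprSeq n).continuous).aestronglyMeasurable.smul
        hf.aestronglyMeasurable
    · rw [norm_smul, NNReal.norm_eq]
      exact mul_le_of_le_one_left (norm_nonneg _)
        (by exact_mod_cast HasOuterApproxClosed.apprSeq_apply_le_one hs n x)
    · have hx := (NNReal.continuous_coe.tendsto _).comp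
        (tendsto_pi_nhds.1 (HasOuterApproxClosed.tendsto_apprSeq hs) x)
      have hind : s.indicator f x = ((s.indicator (fun _ => (1 : ℝ≥0)) x : ℝ≥0) : ℝ) • f x := by
        by_cases hxs : x ∈ s <;> simp [hxs]
      rw [hind]
      exact hx.smul_const (f x)
  simp only [h] at hlim
  exact tendsto_nhds_unique hlim tendsto_const_nhds

section IntegralMul

variable {X : Type*} [TopologicalSpace X] [CompactSpace X] [MeasurableSpace X]
  [OpensMeasurableSpace X] (μ : Measure X) {h : X → ℂ}

theorem integrable_continuousMap_mul (hh : Integrable h μ) (c : C(X, ℂ)) :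
    Integrable (fun x => c x * h x) μ :=
  hh.bdd_mul c.continuous.aestronglyMeasurable (ae_of_all _ c.norm_coe_le_norm)

def integralMulCLM (hh : Integrable h μ) : C(X, ℂ) →L[ℂ] ℂ :=
  LinearMap.mkContinuous
    { toFun := fun c => ∫ x, c x * h x ∂μ
      map_add' := fun c d => by
        simp only [ContinuousMap.add_apply, add_mul]
        exact integral_add (integrable_continuousMap_mul μ hh c)
          (integrable_continuousMap_mul μ hh d)
      map_smul' := fun a c => by
        simp only [ContinuousMap.smul_apply, smul_eq_mul, mul_assoc, RingHom.id_apply]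
        exact integral_const_mul a _ }
    (∫ x, ‖h x‖ ∂μ) fun c => by
      calc ‖∫ x, c x * h x ∂μ‖ ≤ ∫ x, ‖c‖ * ‖h x‖ ∂μ := by
            refine norm_integral_le_of_norm_le (hh.norm.const_mul _) (ae_of_all _ fun x => ?_)
            rw [norm_mul]
            exact mul_le_mul_of_nonneg_right (c.norm_coe_le_norm x) (norm_nonneg _)
        _ = (∫ x, ‖h x‖ ∂μ) * ‖c‖ := by rw [integral_const_mul, mul_comm]

@[simp]
theorem integralMulCLM_apply (hh : Integrable h μ) (c : C(X, ℂ)) :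
    integralMulCLM μ hh c = ∫ x, c x * h x ∂μ := rfl

end IntegralMul

section Fourier

open AddCircle

variable {T : ℝ} [Fact (0 < T)]

theorem ContinuousMap.integrable_haarAddCircle (c : C(AddCircle T, ℂ)) :
    Integrable c haarAddCircle :=
  c.continuous.integrable_of_hasCompactSupport (HasCompactSupport.of_compactSpace _)

theorem fourierCoeff_eq_integralMulCLM (c : C(AddCircle T, ℂ)) (n : ℤ) :
    fourierCoeff c n = integralMulCLM haarAddCircle (fourier (-n)).integrable_haarAddCircle c := by
  simp only [fourierCoeff, integralMulCLM_apply, smul_eq_mul, mul_comm]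

theorem ae_eq_zero_of_fourierCoeff_eq_zero {h : AddCircle T → ℂ}
    (hh : Integrable h haarAddCircle) (h0 : ∀ n, fourierCoeff h n = 0) :
    h =ᵐ[haarAddCircle] 0 := by
  have hspan : (Submodule.span ℂ (Set.range fourier)).topologicalClosure ≤
      (integralMulCLM haarAddCircle hh).ker := by
    refine Submodule.topologicalClosure_minimal _ ?_ (integralMulCLM haarAddCircle hh).isClosed_ker
    rw [Submodule.span_le]
    rintro _ ⟨m, rfl⟩
    simpa [fourierCoeff, smul_eq_mul] using h0 (-m)
  rw [span_fourier_closure_eq_top] at hspan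
  refine ae_eq_zero_of_forall_integral_smul_eq_zero hh fun c => ?_
  let c' : C(AddCircle T, ℂ) := ⟨fun x => (c x : ℂ), by fun_prop⟩
  simpa [c', Complex.real_smul] using hspan (Submodule.mem_top (x := c'))

theorem HasSum.fourierCoeff {ι : Type*} {F : ι → C(AddCircle T, ℂ)} {c : C(AddCircle T, ℂ)}
    (hF : HasSum F c) (n : ℤ) : HasSum (fun i => fourierCoeff (F i) n) (fourierCoeff c n) := by
  simpa only [fourierCoeff_eq_integralMulCLM] using
    hF.mapL (integralMulCLM haarAddCircle (fourier (-n)).integrable_haarAddCircle)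

theorem fourierCoeff_fourier_mul (u : AddCircle T → ℂ) (j n : ℤ) :
    fourierCoeff (fun x => fourier j x * u x) n = fourierCoeff u (n - j) := by
  simp only [fourierCoeff, smul_eq_mul, ← mul_assoc, ← fourier_add]
  ring_nf

theorem exists_continuousMap_ae_eq_of_summable_fourierCoeff {u : AddCircle T → ℂ}
    (hu : Integrable u haarAddCircle) (hsu : Summable fun n => ‖fourierCoeff u n‖) :
    ∃ U : C(AddCircle T, ℂ), u =ᵐ[haarAddCircle] U := by
  have hsum : Summable fun k => fourierCoeff u k • (fourier k : C(AddCircle T, ℂ)) :=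
    .of_norm (by simpa [norm_smul, fourier_norm] using hsu)
  set U := ∑' k, fourierCoeff u k • (fourier k : C(AddCircle T, ℂ))
  have hU : ∀ n, fourierCoeff U n = fourierCoeff u n := fun n => by
    refine ((hsum.hasSum.fourierCoeff n).unique ?_)
    simpa [fourierCoeff.const_smul, fourierCoeff_fourier, Pi.single_apply, eq_comm (a := n)] using
      hasSum_single (f := fun k => if k = n then fourierCoeff u k else 0) n fun k hk => if_neg hk
  refine ⟨U, (sub_ae_eq_zero _ _).1 ?_⟩
  refine ae_eq_zero_of_fourierCoeff_eq_zero (hu.sub U.integrable_haarAddCircle) fun n => ?_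
  simp only [fourierCoeff, Pi.sub_apply, smul_sub,
    integral_sub (hu.fourier_smul _) (U.integrable_haarAddCircle.fourier_smul _)]
  exact sub_eq_zero.2 (hU n).symm

theorem hasSum_fourierCoeff_continuousMap_mul (U V : C(AddCircle T, ℂ))
    (hV : Summable (fourierCoeff V)) (n : ℤ) :
    HasSum (fun j => fourierCoeff U (n - j) * fourierCoeff V j) (fourierCoeff (U * V) n) := by
  have hUV := ((hasSum_fourier_series_of_summable hV).mapL
    (ContinuousLinearMap.mul ℂ C(AddCircle T, ℂ) U)).fourierCoeff n
  convert hUV using 1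
  · ext j
    have hterm : ⇑(ContinuousLinearMap.mul ℂ _ U (fourierCoeff V j • fourier j)) =
        fun x => fourierCoeff V j * (fourier j x * U x) := by
      ext x
      simp only [ContinuousLinearMap.mul_apply', ContinuousMap.mul_apply,
        ContinuousMap.smul_apply, smul_eq_mul]
      ring
    rw [hterm, fourierCoeff.const_mul, fourierCoeff_fourier_mul, mul_comm]
  · rfl

theorem hasSum_fourierCoeff_mul {u v : AddCircle T → ℂ} (hu : Integrable u haarAddCircle)
    (hv : Integrable v haarAddCircle) (hsu : Summable fun n => ‖fourierCoeff u n‖)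
    (hsv : Summable fun n => ‖fourierCoeff v n‖) (n : ℤ) :
    HasSum (fun j => fourierCoeff u (n - j) * fourierCoeff v j)
      (fourierCoeff (fun x => u x * v x) n) := by
  obtain ⟨U, hUu⟩ := exists_continuousMap_ae_eq_of_summable_fourierCoeff hu hsu
  obtain ⟨V, hVv⟩ := exists_continuousMap_ae_eq_of_summable_fourierCoeff hv hsv
  have hUV : (fun x => u x * v x) =ᵐ[haarAddCircle] ⇑(U * V) := hUu.mul hVv
  rw [fourierCoeff_congr_ae hVv] at hsv
  rw [fourierCoeff_congr_ae hUu, fourierCoeff_congr_ae hVv, fourierCoeff_congr_ae hUV]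
  exact hasSum_fourierCoeff_continuousMap_mul U V hsv.of_norm n

end Fourier

theorem Real.rpow_add_le_max_mul {θ a b : ℝ} (hθ : 0 ≤ θ) (ha : 0 ≤ a) (hb : 0 ≤ b) :
    (a + b) ^ θ ≤ max 1 (2 ^ (θ - 1)) * (a ^ θ + b ^ θ) := by
  rcases le_total θ 1 with hθ1 | hθ1
  · exact (Real.rpow_add_le_add_rpow ha hb hθ hθ1).trans
      (le_mul_of_one_le_left (by positivity) (le_max_left _ _))
  · lift a to ℝ≥0 using ha
    lift b to ℝ≥0 using hb
    have h := NNReal.coe_le_coe.2 (NNReal.rpow_add_le_mul_rpow_add_rpow a b hθ1)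
    push_cast at h
    exact h.trans (mul_le_mul_of_nonneg_right (le_max_right _ _) (by positivity))

theorem ENNReal.tsum_tsum_sub_mul {G : Type*} [AddGroup G] (a b : G → ℝ≥0∞) :
    ∑' k, ∑' j, a (k - j) * b j = (∑' k, a k) * ∑' j, b j := by
  rw [ENNReal.tsum_comm, ← ENNReal.tsum_mul_left]
  refine tsum_congr fun j => ?_
  rw [ENNReal.tsum_mul_right]
  exact congrArg (· * b j) ((Equiv.subRight j).tsum_eq a)

def wienerWeight (ϖ θ t : ℝ) (k : ℤ) : ℝ :=
  (1 + |(k : ℝ)| ^ θ) * Real.exp (ϖ * t * |(k : ℝ)|)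

section WienerWeight

variable {ϖ θ t : ℝ}

theorem one_le_wienerWeight (hϖt : 0 ≤ ϖ * t) (k : ℤ) : 1 ≤ wienerWeight ϖ θ t k :=
  one_le_mul_of_one_le_of_one_le (le_add_of_nonneg_right (by positivity))
    (Real.one_le_exp (by positivity))

theorem wienerWeight_add_le (hθ : 0 ≤ θ) (hϖt : 0 ≤ ϖ * t) (m n : ℤ) :
    wienerWeight ϖ θ t (m + n) ≤
      max 1 (2 ^ (θ - 1)) * wienerWeight ϖ θ t m * wienerWeight ϖ θ t n := by
  set C : ℝ := max 1 (2 ^ (θ - 1))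
  have habs : |((m + n : ℤ) : ℝ)| ≤ |(m : ℝ)| + |(n : ℝ)| := by
    push_cast
    exact abs_add_le _ _
  have hpoly : 1 + |((m + n : ℤ) : ℝ)| ^ θ ≤ C * ((1 + |(m : ℝ)| ^ θ) * (1 + |(n : ℝ)| ^ θ)) := by
    have hC : 1 ≤ C := le_max_left _ _
    have hrpow := (Real.rpow_le_rpow (abs_nonneg _) habs hθ).trans
      (Real.rpow_add_le_max_mul hθ (abs_nonneg (m : ℝ)) (abs_nonneg (n : ℝ)))
    have hm : 0 ≤ |(m : ℝ)| ^ θ := by positivity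
    have hn : 0 ≤ |(n : ℝ)| ^ θ := by positivity
    nlinarith [mul_nonneg hm hn]
  have hexp : Real.exp (ϖ * t * |((m + n : ℤ) : ℝ)|) ≤
      Real.exp (ϖ * t * |(m : ℝ)|) * Real.exp (ϖ * t * |(n : ℝ)|) := by
    rw [← Real.exp_add, ← mul_add]
    exact Real.exp_le_exp.2 (mul_le_mul_of_nonneg_left habs hϖt)
  calc wienerWeight ϖ θ t (m + n)
      ≤ C * ((1 + |(m : ℝ)| ^ θ) * (1 + |(n : ℝ)| ^ θ)) *
          (Real.exp (ϖ * t * |(m : ℝ)|) * Real.exp (ϖ * t * |(n : ℝ)|)) :=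
        mul_le_mul hpoly hexp (Real.exp_nonneg _) (by positivity)
    _ = C * wienerWeight ϖ θ t m * wienerWeight ϖ θ t n := by
        simp only [wienerWeight]
        ring

end WienerWeight

section WienerNorm

variable {ϖ θ : ℝ}

def wienerTerm (ϖ θ : ℝ) (h : ℝ → AddCircle (2 * Real.pi) → ℂ) (k : ℤ) : ℝ≥0∞ :=
  ⨆ t : {t : ℝ // 0 ≤ t}, ENNReal.ofReal (wienerWeight ϖ θ t k) * ‖fourierCoeff (h t) k‖ₑ

theorem wienerNorm_eq_tsum_wienerTerm (h : ℝ → AddCircle (2 * Real.pi) → ℂ) :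
    wienerNorm ϖ θ h = ∑' k, wienerTerm ϖ θ h k := by
  refine tsum_congr fun k => ?_
  rw [ENNReal.mul_iSup]
  refine iSup_congr fun t => ?_
  rw [wienerWeight, ENNReal.ofReal_mul (Real.exp_nonneg _), ENNReal.ofReal_mul (by positivity),
    ofReal_norm, mul_assoc (ENNReal.ofReal _)]

theorem le_wienerTerm (h : ℝ → AddCircle (2 * Real.pi) → ℂ) {t : ℝ} (ht : 0 ≤ t) (k : ℤ) :
    ENNReal.ofReal (wienerWeight ϖ θ t k) * ‖fourierCoeff (h t) k‖ₑ ≤ wienerTerm ϖ θ h k :=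
  le_iSup (fun t : {t : ℝ // 0 ≤ t} =>
    ENNReal.ofReal (wienerWeight ϖ θ t k) * ‖fourierCoeff (h t) k‖ₑ) ⟨t, ht⟩

theorem summable_norm_fourierCoeff_of_wienerNorm_ne_top (hϖ : 0 ≤ ϖ)
    {h : ℝ → AddCircle (2 * Real.pi) → ℂ} (hh : wienerNorm ϖ θ h ≠ ⊤) {t : ℝ} (ht : 0 ≤ t) :
    Summable fun k => ‖fourierCoeff (h t) k‖ := by
  refine tsum_enorm_ne_top_iff_summable_norm.1 (ne_top_of_le_ne_top hh ?_)
  rw [wienerNorm_eq_tsum_wienerTerm]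
  refine ENNReal.tsum_le_tsum fun k => le_trans ?_ (le_wienerTerm h ht k)
  refine le_mul_of_one_le_left' ?_
  exact ENNReal.one_le_ofReal.2 (one_le_wienerWeight (mul_nonneg hϖ ht) k)

theorem wienerTerm_mul_le (hϖ : 0 ≤ ϖ) (hθ : 0 ≤ θ) {f g : ℝ → AddCircle (2 * Real.pi) → ℂ}
    (hf : ∀ t, 0 ≤ t → Integrable (f t) AddCircle.haarAddCircle)
    (hg : ∀ t, 0 ≤ t → Integrable (g t) AddCircle.haarAddCircle)
    (hfW : wienerNorm ϖ θ f ≠ ⊤) (hgW : wienerNorm ϖ θ g ≠ ⊤) (k : ℤ) :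
    wienerTerm ϖ θ (fun t x => f t x * g t x) k ≤
      ∑' j, ENNReal.ofReal (max 1 (2 ^ (θ - 1))) *
        (wienerTerm ϖ θ f (k - j) * wienerTerm ϖ θ g j) := by
  refine iSup_le fun ⟨t, ht⟩ => ?_
  set C : ℝ := max 1 (2 ^ (θ - 1))
  have hconv := hasSum_fourierCoeff_mul (hf t ht) (hg t ht)
    (summable_norm_fourierCoeff_of_wienerNorm_ne_top hϖ hfW ht)
    (summable_norm_fourierCoeff_of_wienerNorm_ne_top hϖ hgW ht) k
  have hweight (j : ℤ) : ENNReal.ofReal (wienerWeight ϖ θ t k) ≤ ENNReal.ofReal C *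
      ENNReal.ofReal (wienerWeight ϖ θ t (k - j)) * ENNReal.ofReal (wienerWeight ϖ θ t j) := by
    have hC : 0 ≤ C := zero_le_one.trans (le_max_left _ _)
    have hw : 0 ≤ wienerWeight ϖ θ t (k - j) :=
      zero_le_one.trans (one_le_wienerWeight (mul_nonneg hϖ ht) _)
    rw [← ENNReal.ofReal_mul hC, ← ENNReal.ofReal_mul (mul_nonneg hC hw)]
    refine ENNReal.ofReal_le_ofReal ?_
    simpa using wienerWeight_add_le hθ (mul_nonneg hϖ ht) (k - j) j
  calc ENNReal.ofReal (wienerWeight ϖ θ t k) * ‖fourierCoeff (fun x => f t x * g t x) k‖ₑ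
      ≤ ENNReal.ofReal (wienerWeight ϖ θ t k) *
          ∑' j, ‖fourierCoeff (f t) (k - j)‖ₑ * ‖fourierCoeff (g t) j‖ₑ := by
        rw [← hconv.tsum_eq]
        gcongr
        exact enorm_tsum_le_tsum_enorm.trans_eq (by simp only [enorm_mul])
    _ ≤ ∑' j, ENNReal.ofReal C *
          (ENNReal.ofReal (wienerWeight ϖ θ t (k - j)) * ‖fourierCoeff (f t) (k - j)‖ₑ *
            (ENNReal.ofReal (wienerWeight ϖ θ t j) * ‖fourierCoeff (g t) j‖ₑ)) := by
        rw [← ENNReal.tsum_mul_left]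
        refine ENNReal.tsum_le_tsum fun j => ?_
        calc _ ≤ ENNReal.ofReal C * ENNReal.ofReal (wienerWeight ϖ θ t (k - j)) *
                ENNReal.ofReal (wienerWeight ϖ θ t j) *
                (‖fourierCoeff (f t) (k - j)‖ₑ * ‖fourierCoeff (g t) j‖ₑ) := by
              gcongr
              exact hweight j
          _ = _ := by ring
    _ ≤ ∑' j, ENNReal.ofReal C * (wienerTerm ϖ θ f (k - j) * wienerTerm ϖ θ g j) := by
        gcongr with j
        · exact le_wienerTerm f ht (k - j)
        · exact le_wienerTerm g ht j

end WienerNorm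

/-- `B_ϖ^θ` is a Banach algebra: for `ϖ > 0`, `θ ≥ 0` and `C = max{1, 2^(θ−1)}`, if `f` and `g`
belong to `B_ϖ^θ` then the pointwise product `fg` belongs to `B_ϖ^θ` and
`‖fg‖_{ϖ,θ} ≤ 2C ‖f‖_{ϖ,θ} ‖g‖_{ϖ,θ}`. -/
theorem stmt7 (ϖ θ : ℝ) (hϖ : 0 < ϖ) (hθ : 0 ≤ θ)
    (f g : ℝ → AddCircle (2 * Real.pi) → ℂ)
    (hf : ∀ t : ℝ, 0 ≤ t → Integrable (f t) volume)
    (hg : ∀ t : ℝ, 0 ≤ t → Integrable (g t) volume)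
    (hfW : wienerNorm ϖ θ f ≠ ⊤) (hgW : wienerNorm ϖ θ g ≠ ⊤) :
    wienerNorm ϖ θ (fun t x => f t x * g t x) ≤
        ENNReal.ofReal (2 * max 1 ((2 : ℝ) ^ (θ - 1))) * wienerNorm ϖ θ f * wienerNorm ϖ θ g ∧
      wienerNorm ϖ θ (fun t x => f t x * g t x) ≠ ⊤ := by
  set C : ℝ := max 1 ((2 : ℝ) ^ (θ - 1))
  have haar {u : AddCircle (2 * Real.pi) → ℂ} (hu : Integrable u volume) :
      Integrable u AddCircle.haarAddCircle :=
    memLp_one_iff_integrable.1 (memLp_one_iff_integrable.2 hu).haarAddCircle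
  have hle : wienerNorm ϖ θ (fun t x => f t x * g t x) ≤
      ENNReal.ofReal C * wienerNorm ϖ θ f * wienerNorm ϖ θ g :=
    calc wienerNorm ϖ θ (fun t x => f t x * g t x)
        ≤ ∑' k, ∑' j, ENNReal.ofReal C * (wienerTerm ϖ θ f (k - j) * wienerTerm ϖ θ g j) := by
          rw [wienerNorm_eq_tsum_wienerTerm]
          exact ENNReal.tsum_le_tsum fun k => wienerTerm_mul_le hϖ.le hθ
            (fun t ht => haar (hf t ht)) (fun t ht => haar (hg t ht)) hfW hgW k
      _ = ENNReal.ofReal C * wienerNorm ϖ θ f * wienerNorm ϖ θ g := by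
          simp only [ENNReal.tsum_mul_left, ENNReal.tsum_tsum_sub_mul,
            ← wienerNorm_eq_tsum_wienerTerm, mul_assoc]
  refine ⟨hle.trans ?_, ne_top_of_le_ne_top (by finiteness) hle⟩
  gcongr
  linarith [show (1 : ℝ) ≤ C from le_max_left _ _]

end
end

section
/- Let σ ≥ 1 and 0 < ϖ < 1, and fix ω_av ∈ ℝ. For every h ∈ B_ϖ^θ with θ ≥ 0, the function I⁺h belongs to B_{ϖ,0}^{θ+σ} and ‖I⁺h‖_{ϖ,θ+σ} ≤ ‖h‖_{ϖ,θ} / (1 − ϖ). -/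
open MeasureTheory
open scoped ENNReal

noncomputable section

/-- The Fourier multiplier symbol `e^(−s|k|^σ − i s ω_av sgn k)` of the semigroup `e^(−sL)`. -/
def heatMul (σ ωav s : ℝ) (k : ℤ) : ℂ :=
  Complex.exp (Complex.ofReal (-(s * (|k| : ℝ) ^ σ)) -
    Complex.I * Complex.ofReal (ωav * s * (Int.sign k : ℝ)))

/-! Each Fourier mode `k ≠ 0` of `I⁺h` is a Duhamel integral against the damping `e^(-s|k|^σ)`.
If `e^(ϖτ|k|)|ĥ(k,τ)| ≤ M`, integrating `e^(-(t-τ)|k|^σ - ϖτ|k|)` over `[0,t]` gives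
`e^(ϖt|k|)|Ĝ(k,t)| ≤ M / (|k|^σ - ϖ|k|) ≤ M / ((1-ϖ)|k|^σ)`, using `|k| ≤ |k|^σ` for `σ ≥ 1`.
The gained factor `|k|^σ` pays for raising the weight `1 + |k|^θ` to `1 + |k|^(θ+σ)`. -/

theorem exp_mul_norm_integral_le_of_norm_le {E : Type*} [NormedAddCommGroup E] [NormedSpace ℝ E]
    {F : ℝ → E} {lam μ M t : ℝ} (hμ : μ < lam) (hM : 0 ≤ M) (ht : 0 ≤ t)
    (hF : ∀ τ ∈ Set.Ioc 0 t, ‖F τ‖ ≤ M * Real.exp (-(lam * (t - τ)) - μ * τ)) :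
    Real.exp (μ * t) * ‖∫ τ in (0 : ℝ)..t, F τ‖ ≤ M / (lam - μ) := by
  have hgap : 0 < lam - μ := sub_pos.mpr hμ
  have hderiv : ∀ τ ∈ Set.uIcc 0 t, HasDerivAt
      (fun τ => M * Real.exp (-(lam * (t - τ)) - μ * τ) / (lam - μ))
      (M * Real.exp (-(lam * (t - τ)) - μ * τ)) τ := by
    intro τ _
    have hlin : HasDerivAt (fun τ => -(lam * (t - τ)) - μ * τ) (lam - μ) τ :=
      (((hasDerivAt_id' τ).const_mul (lam - μ)).sub_const (lam * t)).congr_deriv (mul_one _)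
        |>.congr_of_eventuallyEq (.of_forall fun x => by ring)
    exact ((hlin.exp.const_mul M).div_const (lam - μ)).congr_deriv (by field_simp)
  have hcont : Continuous fun τ => M * Real.exp (-(lam * (t - τ)) - μ * τ) := by fun_prop
  have hbound : ‖∫ τ in (0 : ℝ)..t, F τ‖ ≤
      M * (Real.exp (-(μ * t)) - Real.exp (-(lam * t))) / (lam - μ) := by
    refine (intervalIntegral.norm_integral_le_of_norm_le ht
      (Filter.Eventually.of_forall hF) (hcont.intervalIntegrable 0 t)).trans_eq ?_
    rw [intervalIntegral.integral_eq_sub_of_hasDerivAt hderiv (hcont.intervalIntegrable 0 t)]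
    ring_nf
  calc Real.exp (μ * t) * ‖∫ τ in (0 : ℝ)..t, F τ‖
      ≤ Real.exp (μ * t) * (M * (Real.exp (-(μ * t)) - Real.exp (-(lam * t))) / (lam - μ)) :=
        mul_le_mul_of_nonneg_left hbound (Real.exp_nonneg _)
    _ ≤ Real.exp (μ * t) * (M * Real.exp (-(μ * t)) / (lam - μ)) := by
        gcongr
        linarith [Real.exp_nonneg (-(lam * t))]
    _ = M / (lam - μ) := by
        rw [Real.exp_neg]
        field_simp

lemma norm_heatMul (σ ωav s : ℝ) (k : ℤ) :
    ‖heatMul σ ωav s k‖ = Real.exp (-(s * (|k| : ℝ) ^ σ)) := by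
  rw [heatMul, Complex.norm_exp]
  simp [Complex.sub_re, Complex.mul_re]

lemma rpow_mul_norm_duhamel_le {σ ϖ ωav M t : ℝ} (hσ : 1 ≤ σ) (hϖ0 : 0 < ϖ) (hϖ1 : ϖ < 1)
    {k : ℤ} (hk : k ≠ 0) {f : ℝ → ℂ}
    (hf : ∀ τ, 0 ≤ τ → Real.exp (ϖ * τ * (|k| : ℝ)) * ‖f τ‖ ≤ M) (ht : 0 ≤ t) :
    (|k| : ℝ) ^ σ * (Real.exp (ϖ * t * (|k| : ℝ)) *
      ‖∫ τ in (0 : ℝ)..t, heatMul σ ωav (t - τ) k * f τ‖) ≤ M / (1 - ϖ) := by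
  have hn : 1 ≤ |(k : ℝ)| := by exact_mod_cast Int.one_le_abs hk
  set n : ℝ := |(k : ℝ)|
  have hnσ : n ≤ n ^ σ := Real.self_le_rpow_of_one_le hn hσ
  have hnσ0 : 0 < n ^ σ := Real.rpow_pos_of_pos (by linarith) σ
  have hM : 0 ≤ M := le_trans (by positivity) (hf 0 le_rfl)
  have hgap : (1 - ϖ) * n ^ σ ≤ n ^ σ - ϖ * n := by nlinarith
  have hduhamel : Real.exp ((ϖ * n) * t) *
      ‖∫ τ in (0 : ℝ)..t, heatMul σ ωav (t - τ) k * f τ‖ ≤ M / (n ^ σ - ϖ * n) := by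
    refine exp_mul_norm_integral_le_of_norm_le (by nlinarith) hM ht fun τ hτ => ?_
    have hfτ : ‖f τ‖ ≤ M * Real.exp (-(ϖ * τ * n)) := by
      rw [Real.exp_neg, ← div_eq_mul_inv, le_div_iff₀ (Real.exp_pos _), mul_comm]
      exact hf τ hτ.1.le
    calc ‖heatMul σ ωav (t - τ) k * f τ‖
        ≤ Real.exp (-((t - τ) * n ^ σ)) * (M * Real.exp (-(ϖ * τ * n))) := by
          rw [norm_mul, norm_heatMul]
          exact mul_le_mul_of_nonneg_left hfτ (Real.exp_nonneg _)
      _ = M * Real.exp (-(n ^ σ * (t - τ)) - ϖ * n * τ) := by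
          rw [mul_left_comm, ← Real.exp_add]
          ring_nf
  calc n ^ σ * (Real.exp (ϖ * t * n) *
        ‖∫ τ in (0 : ℝ)..t, heatMul σ ωav (t - τ) k * f τ‖)
      ≤ n ^ σ * (M / (n ^ σ - ϖ * n)) := by
        rw [show ϖ * t * n = ϖ * n * t by ring]
        exact mul_le_mul_of_nonneg_left hduhamel hnσ0.le
    _ ≤ n ^ σ * (M / ((1 - ϖ) * n ^ σ)) := by
        gcongr
    _ = M / (1 - ϖ) := by
        field_simp

def coeffSup (ϖ : ℝ) (h : ℝ → AddCircle (2 * Real.pi) → ℂ) (k : ℤ) : ℝ≥0∞ :=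
  ⨆ t : {t : ℝ // 0 ≤ t},
    ENNReal.ofReal (Real.exp (ϖ * (t : ℝ) * (|k| : ℝ)) * ‖fourierCoeff (h (t : ℝ)) k‖)

lemma wienerNorm_eq_tsum_coeffSup (ϖ θ : ℝ) (h : ℝ → AddCircle (2 * Real.pi) → ℂ) :
    wienerNorm ϖ θ h = ∑' k : ℤ, ENNReal.ofReal (1 + (|k| : ℝ) ^ θ) * coeffSup ϖ h k :=
  rfl

lemma rpow_mul_coeffSup_duhamel_le {σ ϖ ωav : ℝ} (hσ : 1 ≤ σ) (hϖ0 : 0 < ϖ) (hϖ1 : ϖ < 1)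
    {h G : ℝ → AddCircle (2 * Real.pi) → ℂ} {k : ℤ} (hk : k ≠ 0)
    (hG : ∀ t : ℝ, 0 ≤ t → fourierCoeff (G t) k =
      ∫ τ in (0 : ℝ)..t, heatMul σ ωav (t - τ) k * fourierCoeff (h τ) k) :
    ENNReal.ofReal ((|k| : ℝ) ^ σ) * coeffSup ϖ G k ≤
      coeffSup ϖ h k / ENNReal.ofReal (1 - ϖ) := by
  rcases eq_or_ne (coeffSup ϖ h k) ⊤ with hS | hS
  · rw [hS, ENNReal.top_div_of_ne_top ENNReal.ofReal_ne_top]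
    exact le_top
  have hf : ∀ τ, 0 ≤ τ →
      Real.exp (ϖ * τ * (|k| : ℝ)) * ‖fourierCoeff (h τ) k‖ ≤ (coeffSup ϖ h k).toReal := fun τ hτ =>
    ENNReal.ofReal_le_iff_le_toReal hS |>.mp <| le_iSup (fun t : {t : ℝ // 0 ≤ t} =>
      ENNReal.ofReal (Real.exp (ϖ * (t : ℝ) * (|k| : ℝ)) * ‖fourierCoeff (h (t : ℝ)) k‖)) ⟨τ, hτ⟩
  rw [coeffSup, ENNReal.mul_iSup]
  refine iSup_le fun t => ?_
  rw [← ENNReal.ofReal_toReal hS, ← ENNReal.ofReal_div_of_pos (by linarith),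
    ← ENNReal.ofReal_mul (by positivity), hG t t.2]
  exact ENNReal.ofReal_le_ofReal (rpow_mul_norm_duhamel_le hσ hϖ0 hϖ1 hk hf t.2)

lemma one_add_rpow_add_le_mul_rpow {n : ℝ} (hn : 1 ≤ n) (θ : ℝ) {σ : ℝ} (hσ : 0 ≤ σ) :
    1 + n ^ (θ + σ) ≤ (1 + n ^ θ) * n ^ σ := by
  rw [Real.rpow_add (by linarith), add_mul, one_mul]
  linarith [Real.one_le_rpow hn hσ]

theorem stmt8_general (σ ϖ θ ωav : ℝ) (hσ : 1 ≤ σ) (hϖ0 : 0 < ϖ) (hϖ1 : ϖ < 1)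
    (h G : ℝ → AddCircle (2 * Real.pi) → ℂ)
    (hG : ∀ t : ℝ, 0 ≤ t → ∀ k : ℤ,
      fourierCoeff (G t) k =
        if k = 0 then 0 else
          ∫ τ in (0 : ℝ)..t, heatMul σ ωav (t - τ) k * fourierCoeff (h τ) k) :
    wienerNorm ϖ (θ + σ) G ≤ wienerNorm ϖ θ h / ENNReal.ofReal (1 - ϖ) := by
  rw [wienerNorm_eq_tsum_coeffSup, wienerNorm_eq_tsum_coeffSup, div_eq_mul_inv,
    ← ENNReal.tsum_mul_right]
  refine ENNReal.tsum_le_tsum fun k => ?_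
  rcases eq_or_ne k 0 with rfl | hk
  · have hG0 : coeffSup ϖ G 0 = 0 := ENNReal.iSup_eq_zero.mpr fun t => by simp [hG t t.2]
    simp [hG0]
  have hweight : ENNReal.ofReal (1 + (|k| : ℝ) ^ (θ + σ)) ≤
      ENNReal.ofReal (1 + (|k| : ℝ) ^ θ) * ENNReal.ofReal ((|k| : ℝ) ^ σ) := by
    rw [← ENNReal.ofReal_mul (by positivity)]
    exact ENNReal.ofReal_le_ofReal <| one_add_rpow_add_le_mul_rpow
      (by exact_mod_cast Int.one_le_abs hk) θ (by linarith)
  have hmode := rpow_mul_coeffSup_duhamel_le hσ hϖ0 hϖ1 hk fun t ht => by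
    rw [hG t ht k, if_neg hk]
  calc ENNReal.ofReal (1 + (|k| : ℝ) ^ (θ + σ)) * coeffSup ϖ G k
      ≤ ENNReal.ofReal (1 + (|k| : ℝ) ^ θ) * (ENNReal.ofReal ((|k| : ℝ) ^ σ) * coeffSup ϖ G k) := by
        rw [← mul_assoc]
        exact mul_le_mul_left hweight _
    _ ≤ ENNReal.ofReal (1 + (|k| : ℝ) ^ θ) * coeffSup ϖ h k * (ENNReal.ofReal (1 - ϖ))⁻¹ := by
        rw [mul_assoc, ← div_eq_mul_inv]
        exact mul_le_mul_right hmode _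

/-- The operator bound for `I⁺h(·,t) = ∫₀ᵗ e^(−(t−τ)L) P₀ h(·,τ) dτ`: if `σ ≥ 1`, `0 < ϖ < 1`,
`θ ≥ 0` and `h ∈ B_ϖ^θ`, then any `G` whose Fourier coefficients are those of `I⁺h` (namely
`Ĝ(k,t) = ∫₀ᵗ e^(−(t−τ)|k|^σ − i(t−τ)ω_av sgn k) ĥ(k,τ) dτ` for `k ≠ 0`, and `Ĝ(0,t) = 0`)
lies in `B_{ϖ,0}^{θ+σ}` with `‖I⁺h‖_{ϖ,θ+σ} ≤ ‖h‖_{ϖ,θ} / (1 − ϖ)`. -/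
theorem stmt8 (σ ϖ θ ωav : ℝ) (hσ : 1 ≤ σ) (hϖ0 : 0 < ϖ) (hϖ1 : ϖ < 1) (hθ : 0 ≤ θ)
    (h G : ℝ → AddCircle (2 * Real.pi) → ℂ)
    (hint : ∀ t : ℝ, 0 ≤ t → Integrable (h t) volume)
    (hhW : wienerNorm ϖ θ h ≠ ⊤)
    (hG : ∀ t : ℝ, 0 ≤ t → ∀ k : ℤ,
      fourierCoeff (G t) k =
        if k = 0 then 0 else
          ∫ τ in (0 : ℝ)..t, heatMul σ ωav (t - τ) k * fourierCoeff (h τ) k) :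
    wienerNorm ϖ (θ + σ) G ≤ wienerNorm ϖ θ h / ENNReal.ofReal (1 - ϖ) :=
  stmt8_general σ ϖ θ ωav hσ hϖ0 hϖ1 h G hG

end
end
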